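/- arXiv:1704.00530 — 6 statements merged into one kernel-verified Lean document; each statement's English description precedes it below -/
import Mathlib

section
/- Let S be a p×p positive definite matrix with block partition as above, and define B⁺(S) = S⁻¹ − diag(0, S₂₂⁻¹). Then B⁺(S) is positive semidefinite and has rank p₁. -/
open Matrix

/-!
Write `S = [[A, B], [Bᴴ, D]]` and `M = [1; -D⁻¹Bᴴ]`. The block-inverse formula gives
`S⁻¹ - diag(0, D⁻¹) = M (A - B D⁻¹ Bᴴ)⁻¹ Mᴴ`, and the Schur complement `A - B D⁻¹ Bᴴ = Mᴴ S M`
is positive definite because `M` is injective. As `M` has the left inverse `[1, 0]`,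
conjugating by `M` preserves rank, so the rank is that of the invertible `p₁ × p₁` matrix
`(A - B D⁻¹ Bᴴ)⁻¹`.
-/

namespace Matrix

variable {l m n : Type*}

theorem IsHermitian.toBlocks₂₁ {α : Type*} [Star α] {S : Matrix (m ⊕ n) (m ⊕ n) α}
    (hS : S.IsHermitian) : S.toBlocks₂₁ = S.toBlocks₁₂ᴴ := by
  conv_lhs => rw [← hS]
  rfl

theorem PosDef.toBlocks₂₂ {R : Type*} [Ring R] [PartialOrder R] [StarRing R]
    {S : Matrix (m ⊕ n) (m ⊕ n) R} (hS : S.PosDef) : S.toBlocks₂₂.PosDef :=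
  hS.submatrix Sum.inr_injective

variable [Fintype l] [Fintype m] [Fintype n] [DecidableEq m] [DecidableEq n]

theorem mulVec_injective_of_mul_eq_one {R : Type*} [Semiring R] {M : Matrix l m R}
    {N : Matrix m l R} (h : N * M = 1) : Function.Injective M.mulVec :=
  Function.LeftInverse.injective (g := N.mulVec) fun x => by rw [mulVec_mulVec, h, one_mulVec]

theorem rank_mul_mul_eq_of_mul_eq_one {R : Type*} [CommSemiring R] [StrongRankCondition R]
    {M : Matrix l m R} {N : Matrix m l R} {M' : Matrix m l R} {N' : Matrix l m R}
    (hM : N * M = 1) (hM' : M' * N' = 1) (X : Matrix m m R) :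
    (M * X * M').rank = X.rank := by
  refine le_antisymm ((rank_mul_le_left _ _).trans (rank_mul_le_right _ _)) ?_
  calc X.rank = (N * (M * X * M') * N').rank := by
        rw [← Matrix.mul_assoc, ← Matrix.mul_assoc, hM, Matrix.one_mul, Matrix.mul_assoc, hM',
          Matrix.mul_one]
    _ ≤ (M * X * M').rank := (rank_mul_le_left _ _).trans (rank_mul_le_right _ _)

section CommRing

variable {α : Type*} [CommRing α]

theorem fromCols_mul_fromBlocks_mul_fromRows_eq_schur (A : Matrix m m α) (B : Matrix m n α)
    (C : Matrix n m α) {D : Matrix n n α} (hD : IsUnit D) :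
    fromCols (1 : Matrix m m α) (-(B * D⁻¹)) * fromBlocks A B C D *
      fromRows (1 : Matrix m m α) (-(D⁻¹ * C)) = A - B * D⁻¹ * C := by
  rw [fromCols_mul_fromBlocks, fromCols_mul_fromRows, Matrix.neg_mul (B * D⁻¹) D,
    Matrix.mul_assoc B D⁻¹ D, nonsing_inv_mul D ((isUnit_iff_isUnit_det D).mp hD)]
  simp only [Matrix.one_mul, Matrix.mul_one, add_neg_cancel, Matrix.zero_mul, neg_zero, add_zero,
    Matrix.mul_neg, Matrix.neg_mul, Matrix.mul_assoc, sub_eq_add_neg]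

theorem inv_fromBlocks_sub_fromBlocks_zero_inv (A : Matrix m m α) (B : Matrix m n α)
    (C : Matrix n m α) {D : Matrix n n α} (hD : IsUnit D) (hABCD : IsUnit (fromBlocks A B C D)) :
    (fromBlocks A B C D)⁻¹ - fromBlocks 0 0 0 D⁻¹ =
      fromRows 1 (-(D⁻¹ * C)) * (A - B * D⁻¹ * C)⁻¹ * fromCols 1 (-(B * D⁻¹)) := by
  let := hD.invertible
  let := hABCD.invertible
  let : Invertible (A - B * ⅟D * C) :=
    (isUnit_fromBlocks_iff_of_invertible₂₂.mp hABCD).invertible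
  rw [← invOf_eq_nonsing_inv, invOf_fromBlocks₂₂_eq, fromRows_mul, fromRows_mul_fromCols,
    sub_eq_iff_eq_add, fromBlocks_add]
  simp only [invOf_eq_nonsing_inv, add_zero, add_comm D⁻¹, Matrix.one_mul, Matrix.mul_one,
    Matrix.mul_neg, Matrix.neg_mul, neg_neg, Matrix.mul_assoc]

end CommRing

theorem PosDef.exists_inv_sub_fromBlocks_zero_inv_eq_mul_mul_conjTranspose {K : Type*} [Field K]
    [PartialOrder K] [StarRing K] {S : Matrix (m ⊕ n) (m ⊕ n) K} (hS : S.PosDef) :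
    ∃ (M : Matrix (m ⊕ n) m K) (N : Matrix m (m ⊕ n) K) (X : Matrix m m K),
      X.PosDef ∧ N * M = 1 ∧ S⁻¹ - fromBlocks 0 0 0 S.toBlocks₂₂⁻¹ = M * X * Mᴴ := by
  have hD := hS.toBlocks₂₂
  obtain ⟨A, B, D, rfl⟩ : ∃ A B D, S = fromBlocks A B Bᴴ D :=
    ⟨_, _, _, by rw [← hS.isHermitian.toBlocks₂₁, fromBlocks_toBlocks]⟩
  rw [toBlocks_fromBlocks₂₂] at hD ⊢
  set M := fromRows (1 : Matrix m m K) (-(D⁻¹ * Bᴴ))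
  have hMH : Mᴴ = fromCols 1 (-(B * D⁻¹)) := by
    simp [M, conjTranspose_fromRows_eq_fromCols_conjTranspose, hD.isHermitian.inv.eq]
  have hleft : fromCols (1 : Matrix m m K) (0 : Matrix m n K) * M = 1 := by
    simp [M, fromCols_mul_fromRows]
  have hSchur : (A - B * D⁻¹ * Bᴴ).PosDef := by
    rw [← fromCols_mul_fromBlocks_mul_fromRows_eq_schur _ _ _ hD.isUnit, ← hMH]
    exact hS.conjTranspose_mul_mul_same (mulVec_injective_of_mul_eq_one hleft)
  refine ⟨M, _, _, hSchur.inv, hleft, ?_⟩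
  rw [inv_fromBlocks_sub_fromBlocks_zero_inv _ _ _ hD.isUnit hS.isUnit, hMH]

end Matrix

/-- For positive definite block matrix `S`,
`B⁺(S) = S⁻¹ − diag(0, S₂₂⁻¹)` is positive semidefinite of rank `p₁`. -/
theorem stmt1 (p₁ p₂ : ℕ)
    (S : Matrix (Fin p₁ ⊕ Fin p₂) (Fin p₁ ⊕ Fin p₂) ℝ) (hS : S.PosDef) :
    (S⁻¹ - fromBlocks 0 0 0 (S.toBlocks₂₂)⁻¹).PosSemidef ∧
      (S⁻¹ - fromBlocks 0 0 0 (S.toBlocks₂₂)⁻¹).rank = p₁ := by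
  obtain ⟨M, N, X, hX, hNM, hfactor⟩ :=
    hS.exists_inv_sub_fromBlocks_zero_inv_eq_mul_mul_conjTranspose
  have hMN : Mᴴ * Nᴴ = 1 := by rw [← conjTranspose_mul, hNM, conjTranspose_one]
  rw [hfactor, rank_mul_mul_eq_of_mul_eq_one hNM hMN, rank_of_isUnit X hX.isUnit,
    Fintype.card_fin]
  exact ⟨hX.posSemidef.mul_mul_conjTranspose_same M, rfl⟩
end

section
/- Let S be positive definite with blocks as above and define B⁺(S)B(S) as in the previous statement. Then B⁺(S)B(S) = B(S)B⁺(S) = C(S)(C(S)ᵀC(S))⁻¹C(S)ᵀ, i.e., both products equal the orthogonal projection onto the column space of C(S) = [I; −S₂₂⁻¹S₂₁]. -/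
open Matrix

/-- The `p × p₁` matrix `C(S) = [I; −S₂₂⁻¹S₂₁]`. -/
noncomputable def Cmat (p₁ p₂ : ℕ)
    (S : Matrix (Fin p₁ ⊕ Fin p₂) (Fin p₁ ⊕ Fin p₂) ℝ) :
    Matrix (Fin p₁ ⊕ Fin p₂) (Fin p₁) ℝ :=
  fromRows (1 : Matrix (Fin p₁) (Fin p₁) ℝ) (-((S.toBlocks₂₂)⁻¹ * S.toBlocks₂₁))

/-- The Schur complement `D(S) = S₁₁:₂ = S₁₁ − S₁₂S₂₂⁻¹S₂₁`. -/
noncomputable def Dmat (p₁ p₂ : ℕ)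
    (S : Matrix (Fin p₁ ⊕ Fin p₂) (Fin p₁ ⊕ Fin p₂) ℝ) :
    Matrix (Fin p₁) (Fin p₁) ℝ :=
  S.toBlocks₁₁ - S.toBlocks₁₂ * (S.toBlocks₂₂)⁻¹ * S.toBlocks₂₁

/-- `B⁺(S) = C(S) D(S)⁻¹ C(S)ᵀ`. -/
noncomputable def Bplus (p₁ p₂ : ℕ)
    (S : Matrix (Fin p₁ ⊕ Fin p₂) (Fin p₁ ⊕ Fin p₂) ℝ) :
    Matrix (Fin p₁ ⊕ Fin p₂) (Fin p₁ ⊕ Fin p₂) ℝ :=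
  Cmat p₁ p₂ S * (Dmat p₁ p₂ S)⁻¹ * (Cmat p₁ p₂ S)ᵀ

/-- `B(S) = C(S) (C(S)ᵀC(S))⁻¹ D(S) (C(S)ᵀC(S))⁻¹ C(S)ᵀ`. -/
noncomputable def Bmat (p₁ p₂ : ℕ)
    (S : Matrix (Fin p₁ ⊕ Fin p₂) (Fin p₁ ⊕ Fin p₂) ℝ) :
    Matrix (Fin p₁ ⊕ Fin p₂) (Fin p₁ ⊕ Fin p₂) ℝ :=
  Cmat p₁ p₂ S * ((Cmat p₁ p₂ S)ᵀ * Cmat p₁ p₂ S)⁻¹ * Dmat p₁ p₂ S *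
    ((Cmat p₁ p₂ S)ᵀ * Cmat p₁ p₂ S)⁻¹ * (Cmat p₁ p₂ S)ᵀ

/-
Both `B⁺(S)` and `B(S)` have the form `C M Cᵀ`, so in either product the middle factor
`Cᵀ C` is absorbed by the adjacent `(CᵀC)⁻¹`, after which `D` meets `D⁻¹`. What remains is
that these inverses are genuine: `CᵀC` is invertible because the identity block of `C`
makes `C` injective, and `D(S)` is invertible because `det S = det S₂₂ · det D(S)`.
-/

namespace Matrix

variable {m n R : Type*} [Fintype m] [DecidableEq m] [Fintype n] [CommRing R]

theorem mul_inv_mul_transpose_mul_gram_sandwich (C : Matrix n m R) {D : Matrix m m R}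
    (hD : IsUnit D.det) (hC : IsUnit (Cᵀ * C).det) :
    C * D⁻¹ * Cᵀ * (C * (Cᵀ * C)⁻¹ * D * (Cᵀ * C)⁻¹ * Cᵀ) = C * (Cᵀ * C)⁻¹ * Cᵀ := by
  simp only [Matrix.mul_assoc]
  rw [← Matrix.mul_assoc Cᵀ C, mul_nonsing_inv_cancel_left _ _ hC,
    nonsing_inv_mul_cancel_left _ _ hD]

theorem gram_sandwich_mul_mul_inv_mul_transpose (C : Matrix n m R) {D : Matrix m m R}
    (hD : IsUnit D.det) (hC : IsUnit (Cᵀ * C).det) :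
    C * (Cᵀ * C)⁻¹ * D * (Cᵀ * C)⁻¹ * Cᵀ * (C * D⁻¹ * Cᵀ) = C * (Cᵀ * C)⁻¹ * Cᵀ := by
  simp only [Matrix.mul_assoc]
  rw [← Matrix.mul_assoc Cᵀ C, nonsing_inv_mul_cancel_left _ _ hC,
    mul_nonsing_inv_cancel_left _ _ hD]

theorem mulVec_fromRows_one_injective {l : Type*} (A : Matrix l m R) :
    Function.Injective (fromRows (1 : Matrix m m R) A).mulVec := by
  intro x y hxy
  simpa [fromRows_mulVec] using congrArg (fun v => v ∘ Sum.inl) hxy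

theorem isUnit_det_sub_mul_inv_mul_of_fromBlocks {A : Matrix m m R} {B : Matrix m n R}
    {C : Matrix n m R} [DecidableEq n] {D : Matrix n n R} (hM : IsUnit (fromBlocks A B C D).det)
    (hD : IsUnit D.det) : IsUnit (A - B * D⁻¹ * C).det := by
  let := invertibleOfIsUnitDet D hD
  rw [det_fromBlocks₂₂, invOf_eq_nonsing_inv, IsUnit.mul_iff] at hM
  exact hM.2

end Matrix

variable {p₁ p₂ : ℕ} {S : Matrix (Fin p₁ ⊕ Fin p₂) (Fin p₁ ⊕ Fin p₂) ℝ}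

theorem isUnit_det_Cmat_gram : IsUnit ((Cmat p₁ p₂ S)ᵀ * Cmat p₁ p₂ S).det := by
  have h := PosDef.conjTranspose_mul_self _ (mulVec_fromRows_one_injective
    (-((S.toBlocks₂₂)⁻¹ * S.toBlocks₂₁)))
  rw [conjTranspose_eq_transpose_of_trivial] at h
  exact isUnit_iff_ne_zero.mpr h.det_pos.ne'

theorem isUnit_det_Dmat (hS : S.PosDef) : IsUnit (Dmat p₁ p₂ S).det := by
  have h₂₂ : S.toBlocks₂₂.PosDef := hS.submatrix Sum.inr_injective
  refine isUnit_det_sub_mul_inv_mul_of_fromBlocks ?_ (isUnit_iff_ne_zero.mpr h₂₂.det_pos.ne')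
  rw [fromBlocks_toBlocks]
  exact isUnit_iff_ne_zero.mpr hS.det_pos.ne'

/-- `B⁺(S)B(S) = B(S)B⁺(S) = C(S)(C(S)ᵀC(S))⁻¹C(S)ᵀ`, the
orthogonal projection onto the column space of `C(S)`. -/
theorem stmt3 (p₁ p₂ : ℕ)
    (S : Matrix (Fin p₁ ⊕ Fin p₂) (Fin p₁ ⊕ Fin p₂) ℝ) (hS : S.PosDef) :
    Bplus p₁ p₂ S * Bmat p₁ p₂ S = Bmat p₁ p₂ S * Bplus p₁ p₂ S ∧
    Bmat p₁ p₂ S * Bplus p₁ p₂ S =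
      Cmat p₁ p₂ S * ((Cmat p₁ p₂ S)ᵀ * Cmat p₁ p₂ S)⁻¹ * (Cmat p₁ p₂ S)ᵀ := by
  have hBplusB := mul_inv_mul_transpose_mul_gram_sandwich _ (isUnit_det_Dmat hS)
    (isUnit_det_Cmat_gram (S := S))
  have hBBplus := gram_sandwich_mul_mul_inv_mul_transpose _ (isUnit_det_Dmat hS)
    (isUnit_det_Cmat_gram (S := S))
  exact ⟨hBplusB.trans hBBplus.symm, hBBplus⟩
end

section
/- Let A₁ and A₂ be p×p real symmetric positive semidefinite matrices, each of rank r, with the same column space. Then there exists an invertible p×p matrix G and a diagonal r×r matrix D_r with positive entries such that A₁ = G · diag(I_r, 0) · Gᵀ and A₂ = G · diag(D_r, 0) · Gᵀ. -/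
open Matrix

/-!
Write `E = diag(I_r, 0)`. Ordering the spectral decomposition of `A₁` so that the positive
eigenvalues come first and rescaling the eigenvectors by their square roots gives an invertible
`G₀` with `A₁ = G₀ E G₀ᵀ`. Then `B = G₀⁻¹ A₂ G₀⁻ᵀ` is positive semidefinite of rank `r`, and
it has the same range as `G₀⁻¹ A₁ G₀⁻ᵀ = E`. Diagonalise `B = W D Wᵀ` orthogonally, again with
the positive eigenvalues first. Now `W E Wᵀ` is an orthogonal projection onto the range of `B`,
i.e. onto the range of `E`, so `W E Wᵀ = E`, and `G = G₀ W` works.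
-/

theorem Equiv.Perm.exists_apply_iff_of_card_eq {α : Type*} [Fintype α] {p q : α → Prop}
    [DecidablePred p] [DecidablePred q]
    (h : Fintype.card {x // p x} = Fintype.card {x // q x}) :
    ∃ e : Equiv.Perm α, ∀ x, p (e x) ↔ q x := by
  let f := Fintype.equivOfCardEq h.symm
  let g := Fintype.equivOfCardEq (Fintype.card_compl_eq_card_compl q p h.symm)
  refine ⟨Equiv.subtypeCongr f g, fun x => ?_⟩
  by_cases hx : q x
  · simpa [Equiv.subtypeCongr, hx] using (f ⟨x, hx⟩).2
  · simpa [Equiv.subtypeCongr, hx] using (g ⟨x, hx⟩).2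

theorem IsStarProjection.conjugate {R : Type*} [Monoid R] [StarMul R] {P U : R}
    (hP : IsStarProjection P) (hU : star U * U = 1) : IsStarProjection (U * P * star U) := by
  refine ⟨?_, hP.isSelfAdjoint.conjugate U⟩
  calc U * P * star U * (U * P * star U) = U * (P * (star U * U) * P) * star U := by
        simp only [mul_assoc]
    _ = U * P * star U := by rw [hU, mul_one, hP.isIdempotentElem.eq]

namespace Matrix

variable {m n k : Type*} [Fintype n] [Fintype k]

theorem star_eq_transpose {α : Type*} [Star α] [TrivialStar α] (M : Matrix m m α) :
    star M = Mᵀ :=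
  (star_eq_conjTranspose M).trans (conjTranspose_eq_transpose_of_trivial M)

theorem mul_mul_mul_transpose {α : Type*} [CommSemiring α] (X Y M : Matrix n n α) :
    X * Y * M * (X * Y)ᵀ = X * (Y * M * Yᵀ) * Xᵀ := by
  simp only [transpose_mul, Matrix.mul_assoc]

theorem mul_mul_mul_transpose_of_mul_eq_one [DecidableEq n] {α : Type*} [CommSemiring α]
    {X Y : Matrix n n α} (h : X * Y = 1) (M : Matrix n n α) : X * (Y * M * Yᵀ) * Xᵀ = M := by
  rw [← mul_mul_mul_transpose, h, Matrix.one_mul, transpose_one, Matrix.mul_one]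

theorem range_mulVecLin_mul_mul_of_isUnit [DecidableEq k] {R : Type*} [CommRing R]
    (X : Matrix m n R) (A : Matrix n k R) {Y : Matrix k k R} (hY : IsUnit Y) :
    LinearMap.range (X * A * Y).mulVecLin = (LinearMap.range A.mulVecLin).map X.mulVecLin := by
  rw [mulVecLin_mul, mulVecLin_mul, LinearMap.range_comp_of_range_eq_top _
    (LinearMap.range_eq_top.2 (mulVec_surjective_iff_isUnit.2 hY)), LinearMap.range_comp]

theorem range_mulVecLin_diagonal_eq_of_zero_iff [DecidableEq n] {K : Type*} [Semifield K]
    {d d' : n → K} (h : ∀ i, d i = 0 ↔ d' i = 0) :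
    LinearMap.range (diagonal d).mulVecLin = LinearMap.range (diagonal d').mulVecLin := by
  simp only [← toLin'_apply', range_diagonal, ne_eq, h]

theorem mul_eq_of_range_mulVecLin_le [DecidableEq k] {R : Type*} [CommRing R]
    {P : Matrix n n R} {N : Matrix n k R} (hP : IsIdempotentElem P)
    (h : LinearMap.range N.mulVecLin ≤ LinearMap.range P.mulVecLin) : P * N = N := by
  refine toLin'.injective (LinearMap.ext fun v => ?_)
  obtain ⟨w, hw : P *ᵥ w = N *ᵥ v⟩ := h (LinearMap.mem_range_self N.mulVecLin v)
  rw [toLin'_apply, toLin'_apply, ← mulVec_mulVec, ← hw, mulVec_mulVec, hP.eq]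

theorem eq_of_isStarProjection_of_range_eq [DecidableEq n] {R : Type*} [CommRing R] [StarRing R]
    {P Q : Matrix n n R} (hP : IsStarProjection P) (hQ : IsStarProjection Q)
    (h : LinearMap.range P.mulVecLin = LinearMap.range Q.mulVecLin) : P = Q := by
  have hPQ : P * Q = Q := mul_eq_of_range_mulVecLin_le hP.isIdempotentElem h.ge
  have hQP : Q * P = P := mul_eq_of_range_mulVecLin_le hQ.isIdempotentElem h.le
  calc P = star P := hP.isSelfAdjoint.symm
    _ = star (Q * P) := by rw [hQP]
    _ = P * Q := by rw [star_mul, hP.isSelfAdjoint.star_eq, hQ.isSelfAdjoint.star_eq]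
    _ = Q := hPQ

theorem IsHermitian.exists_eq_mul_diagonal_mul_transpose [DecidableEq n] {A : Matrix n n ℝ}
    (hA : A.IsHermitian) :
    ∃ U : Matrix n n ℝ, Uᵀ * U = 1 ∧ A = U * diagonal hA.eigenvalues * Uᵀ := by
  refine ⟨hA.eigenvectorUnitary, ?_, ?_⟩
  · simpa [star_eq_transpose] using Unitary.star_mul_self_of_mem hA.eigenvectorUnitary.2
  · simpa [star_eq_transpose] using hA.spectral_theorem

theorem submatrix_mul_diagonal_mul_transpose [DecidableEq n] (U : Matrix n n ℝ) (μ : n → ℝ)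
    (e : Equiv.Perm n) :
    U.submatrix id e * diagonal (μ ∘ e) * (U.submatrix id e)ᵀ = U * diagonal μ * Uᵀ := by
  ext i j
  simp only [mul_apply (M := _ * diagonal _), mul_diagonal, submatrix_apply, transpose_apply, id,
    Function.comp_apply]
  exact Equiv.sum_comp e (fun k => U i k * μ k * U j k)

theorem PosSemidef.exists_sorted_diagonalization {p : ℕ} {A : Matrix (Fin p) (Fin p) ℝ}
    (hA : A.PosSemidef) :
    ∃ U : Matrix (Fin p) (Fin p) ℝ, Uᵀ * U = 1 ∧ ∃ μ : Fin p → ℝ,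
      (∀ i : Fin p, if (i : ℕ) < A.rank then 0 < μ i else μ i = 0) ∧
      A = U * diagonal μ * Uᵀ := by
  obtain ⟨U, hU, hAU⟩ := hA.1.exists_eq_mul_diagonal_mul_transpose
  have hcard : Fintype.card {i // hA.1.eigenvalues i ≠ 0} =
      Fintype.card {i : Fin p // (i : ℕ) < A.rank} := by
    rw [Fintype.card_fin_lt_of_le (rank_le_width A), hA.1.rank_eq_card_non_zero_eigs]
  obtain ⟨e, he⟩ := Equiv.Perm.exists_apply_iff_of_card_eq hcard
  refine ⟨U.submatrix id e, ?_, hA.1.eigenvalues ∘ e, fun i => ?_, ?_⟩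
  · rw [transpose_submatrix, ← submatrix_mul _ _ _ _ _ Function.bijective_id, hU,
      submatrix_one_equiv]
  · split_ifs with hi
    · exact (hA.eigenvalues_nonneg (e i)).lt_of_ne' ((he i).2 hi)
    · exact not_not.1 (mt (he i).1 hi)
  · rwa [submatrix_mul_diagonal_mul_transpose]

def diagIdZero {p : ℕ} (r : ℕ) : Matrix (Fin p) (Fin p) ℝ :=
  diagonal fun i => if (i : ℕ) < r then 1 else 0

theorem isStarProjection_diagIdZero {p : ℕ} (r : ℕ) :
    IsStarProjection (diagIdZero r : Matrix (Fin p) (Fin p) ℝ) := by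
  refine ⟨?_, ?_⟩
  · rw [IsIdempotentElem, diagIdZero, diagonal_mul_diagonal]
    congr 1
    funext i
    split_ifs <;> simp
  · rw [IsSelfAdjoint, star_eq_transpose, diagIdZero, diagonal_transpose]

theorem PosSemidef.exists_isUnit_eq_mul_diagIdZero_mul_transpose {p : ℕ}
    {A : Matrix (Fin p) (Fin p) ℝ} (hA : A.PosSemidef) :
    ∃ G : Matrix (Fin p) (Fin p) ℝ, IsUnit G ∧ A = G * diagIdZero A.rank * Gᵀ := by
  obtain ⟨U, hU, μ, hμ, hAU⟩ := hA.exists_sorted_diagonalization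
  set s : Fin p → ℝ := fun i => if (i : ℕ) < A.rank then √(μ i) else 1
  have hs : ∀ i, s i ≠ 0 := fun i => by
    have := hμ i
    simp only [s]
    split_ifs at this ⊢
    exacts [(Real.sqrt_pos.2 this).ne', one_ne_zero]
  have hsμ : diagonal s * diagIdZero A.rank * diagonal s = diagonal μ := by
    simp only [diagIdZero, diagonal_mul_diagonal]
    congr 1
    funext i
    have := hμ i
    simp only [s]
    split_ifs at this ⊢
    · rw [mul_one, Real.mul_self_sqrt this.le]
    · rw [mul_zero, zero_mul, this]
  refine ⟨U * diagonal s, (IsUnit.of_mul_eq_one_right Uᵀ hU).mul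
    (isUnit_diagonal.2 (Pi.isUnit_iff.2 fun i => (hs i).isUnit)), ?_⟩
  calc A = U * diagonal μ * Uᵀ := hAU
    _ = U * diagonal s * diagIdZero A.rank * (U * diagonal s)ᵀ := by
      rw [mul_mul_mul_transpose, diagonal_transpose, hsμ]

theorem PosSemidef.exists_sorted_diagonalization_of_range_eq_diagIdZero {p r : ℕ}
    {B : Matrix (Fin p) (Fin p) ℝ} (hB : B.PosSemidef) (hr : B.rank = r)
    (hrange : LinearMap.range B.mulVecLin = LinearMap.range (diagIdZero r).mulVecLin) :
    ∃ W : Matrix (Fin p) (Fin p) ℝ, Wᵀ * W = 1 ∧ W * diagIdZero r * Wᵀ = diagIdZero r ∧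
      ∃ δ : Fin p → ℝ, (∀ i : Fin p, if (i : ℕ) < r then 0 < δ i else δ i = 0) ∧
        B = W * diagonal δ * Wᵀ := by
  obtain ⟨W, hW, δ, hδ, hBW⟩ := hB.exists_sorted_diagonalization
  rw [hr] at hδ
  have hWE : IsStarProjection (W * diagIdZero r * Wᵀ) := by
    rw [← star_eq_transpose] at hW ⊢
    exact (isStarProjection_diagIdZero r).conjugate hW
  have hsupp : ∀ i : Fin p, (if (i : ℕ) < r then (1 : ℝ) else 0) = 0 ↔ δ i = 0 := fun i => by
    have := hδ i
    split_ifs at this ⊢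
    · simp [this.ne']
    · simp [this]
  have hWT : IsUnit Wᵀ := IsUnit.of_mul_eq_one W hW
  refine ⟨W, hW, eq_of_isStarProjection_of_range_eq hWE (isStarProjection_diagIdZero r) ?_,
    δ, hδ, hBW⟩
  rw [← hrange, hBW, range_mulVecLin_mul_mul_of_isUnit _ _ hWT,
    range_mulVecLin_mul_mul_of_isUnit _ _ hWT, diagIdZero,
    range_mulVecLin_diagonal_eq_of_zero_iff hsupp]

end Matrix

theorem stmt7_general (p r : ℕ) (A₁ A₂ : Matrix (Fin p) (Fin p) ℝ)
    (h1 : A₁.PosSemidef) (h2 : A₂.PosSemidef)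
    (hr1 : A₁.rank = r) (hr2 : A₂.rank = r)
    (hrange : LinearMap.range A₁.mulVecLin = LinearMap.range A₂.mulVecLin) :
    ∃ G : Matrix (Fin p) (Fin p) ℝ, IsUnit G ∧
      ∃ d : Fin p → ℝ,
        (∀ i : Fin p, if (i : ℕ) < r then 0 < d i else d i = 0) ∧
        A₁ = G * Matrix.diagonal (fun i : Fin p => if (i : ℕ) < r then (1 : ℝ) else 0) * Gᵀ ∧
        A₂ = G * Matrix.diagonal d * Gᵀ := by
  obtain ⟨G₀, hG₀, hA₁⟩ := h1.exists_isUnit_eq_mul_diagIdZero_mul_transpose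
  rw [hr1] at hA₁
  have hG₀det := (isUnit_iff_isUnit_det G₀).1 hG₀
  set H := G₀⁻¹
  have hHT : IsUnit Hᵀ := IsUnit.of_mul_eq_one G₀ᵀ <| by
    rw [← transpose_mul, mul_nonsing_inv _ hG₀det, transpose_one]
  set B := H * A₂ * Hᵀ
  have hE : H * A₁ * Hᵀ = diagIdZero r := by
    rw [hA₁, mul_mul_mul_transpose_of_mul_eq_one (nonsing_inv_mul _ hG₀det)]
  have hBrange : LinearMap.range B.mulVecLin = LinearMap.range (diagIdZero r).mulVecLin := by
    rw [← hE, range_mulVecLin_mul_mul_of_isUnit _ _ hHT, range_mulVecLin_mul_mul_of_isUnit _ _ hHT,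
      hrange]
  have hBr : B.rank = r := by
    rw [rank_mul_eq_left_of_isUnit_det _ _ ((isUnit_iff_isUnit_det _).1 hHT),
      rank_mul_eq_right_of_isUnit_det _ _ (isUnit_nonsing_inv_det_iff.2 hG₀det), hr2]
  have hB : B.PosSemidef := by
    simpa [conjTranspose_eq_transpose_of_trivial] using h2.mul_mul_conjTranspose_same H
  obtain ⟨W, hW, hWE, δ, hδ, hBW⟩ :=
    hB.exists_sorted_diagonalization_of_range_eq_diagIdZero hBr hBrange
  refine ⟨G₀ * W, hG₀.mul (IsUnit.of_mul_eq_one_right _ hW), δ, hδ, ?_, ?_⟩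
  · calc A₁ = G₀ * (W * diagIdZero r * Wᵀ) * G₀ᵀ := by rw [hWE, hA₁]
      _ = G₀ * W * diagIdZero r * (G₀ * W)ᵀ := (mul_mul_mul_transpose ..).symm
  · calc A₂ = G₀ * (W * diagonal δ * Wᵀ) * G₀ᵀ := by
          rw [← hBW, mul_mul_mul_transpose_of_mul_eq_one (mul_nonsing_inv _ hG₀det)]
      _ = G₀ * W * diagonal δ * (G₀ * W)ᵀ := (mul_mul_mul_transpose ..).symm

/-- Two `p × p` real symmetric positive semidefinite matrices of
common rank `r` with the same column space admit a simultaneous congruence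
`A₁ = G diag(I_r, 0) Gᵀ`, `A₂ = G diag(D_r, 0) Gᵀ` with `G` invertible and
`D_r` diagonal with positive entries. -/
theorem stmt7 (p r : ℕ) (hr : r ≤ p) (A₁ A₂ : Matrix (Fin p) (Fin p) ℝ)
    (h1 : A₁.PosSemidef) (h2 : A₂.PosSemidef)
    (hr1 : A₁.rank = r) (hr2 : A₂.rank = r)
    (hrange : LinearMap.range A₁.mulVecLin = LinearMap.range A₂.mulVecLin) :
    ∃ G : Matrix (Fin p) (Fin p) ℝ, IsUnit G ∧
      ∃ d : Fin p → ℝ,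
        (∀ i : Fin p, if (i : ℕ) < r then 0 < d i else d i = 0) ∧
        A₁ = G * Matrix.diagonal (fun i : Fin p => if (i : ℕ) < r then (1 : ℝ) else 0) * Gᵀ ∧
        A₂ = G * Matrix.diagonal d * Gᵀ :=
  stmt7_general p r A₁ A₂ h1 h2 hr1 hr2 hrange
end

section
/- Let A₁, A₂ be p×p real symmetric positive semidefinite matrices with equal column spaces, and let A⁺ denote Moore–Penrose pseudoinverse. Then for all vectors x, y ∈ ℝᵖ lying in the common column space: (x + y)ᵀ(A₁ + A₂)⁺(x + y) ≤ xᵀA₁⁺x + yᵀA₂⁺y. -/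
/-! With `z := (A₁ + A₂)⁺ s`, `s := x + y = A₁ u + A₂ v`, the Penrose identities give
`sᵀ (A₁ + A₂)⁺ s = 2 zᵀ s - zᵀ (A₁ + A₂) z`, which splits as
`(2 zᵀ A₁ u - zᵀ A₁ z) + (2 zᵀ A₂ v - zᵀ A₂ z)`. For a positive semidefinite `A`,
`2 zᵀ A w - zᵀ A z ≤ wᵀ A w` since `(z - w)ᵀ A (z - w) ≥ 0`, and `wᵀ A w = (A w)ᵀ A⁺ (A w)`
by `A A⁺ A = A`. -/

open Matrix

/-- `B` is the Moore–Penrose pseudoinverse of `A` (the four Penrose conditions). -/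
def IsMoorePenrose (p : ℕ) (A B : Matrix (Fin p) (Fin p) ℝ) : Prop :=
  A * B * A = A ∧ B * A * B = B ∧ (A * B)ᵀ = A * B ∧ (B * A)ᵀ = B * A

theorem Matrix.PosSemidef.two_mul_dotProduct_mulVec_le {n : Type*} [Fintype n]
    {A : Matrix n n ℝ} (hA : A.PosSemidef) (z w : n → ℝ) :
    2 * (z ⬝ᵥ A *ᵥ w) ≤ z ⬝ᵥ A *ᵥ z + w ⬝ᵥ A *ᵥ w := by
  have hsymm : w ⬝ᵥ A *ᵥ z = z ⬝ᵥ A *ᵥ w := by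
    rw [← dotProduct_transpose_mulVec, ← conjTranspose_eq_transpose_of_trivial, hA.1]
  have hnonneg := hA.dotProduct_mulVec_nonneg (z - w)
  simp only [star_trivial, mulVec_sub, dotProduct_sub, sub_dotProduct, hsymm] at hnonneg
  linarith

namespace IsMoorePenrose

variable {p : ℕ} {A B C : Matrix (Fin p) (Fin p) ℝ}

theorem unique (hB : IsMoorePenrose p A B) (hC : IsMoorePenrose p A C) : B = C := by
  obtain ⟨hB₁, hB₂, hB₃, hB₄⟩ := hB
  obtain ⟨hC₁, hC₂, hC₃, hC₄⟩ := hC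
  have hAB : A * B = A * C :=
    calc A * B = (A * C) * (A * B) := by rw [← Matrix.mul_assoc, hC₁]
    _ = ((A * B) * (A * C))ᵀ := by rw [transpose_mul, hB₃, hC₃]
    _ = A * C := by rw [← Matrix.mul_assoc, hB₁, hC₃]
  have hBA : B * A = C * A :=
    calc B * A = (B * A) * (C * A) := by rw [Matrix.mul_assoc, ← Matrix.mul_assoc A, hC₁]
    _ = ((C * A) * (B * A))ᵀ := by rw [transpose_mul, hB₄, hC₄]
    _ = C * A := by rw [Matrix.mul_assoc, ← Matrix.mul_assoc A, hB₁, hC₄]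
  calc B = B * A * B := hB₂.symm
  _ = C * A * C := by rw [hBA, Matrix.mul_assoc, hAB, ← Matrix.mul_assoc]
  _ = C := hC₂

theorem transpose (hB : IsMoorePenrose p A B) : IsMoorePenrose p Aᵀ Bᵀ := by
  obtain ⟨hB₁, hB₂, hB₃, hB₄⟩ := hB
  refine ⟨?_, ?_, ?_, ?_⟩
  · rw [← transpose_mul, ← transpose_mul, ← Matrix.mul_assoc, hB₁]
  · rw [← transpose_mul, ← transpose_mul, ← Matrix.mul_assoc, hB₂]
  · rw [← transpose_mul, transpose_transpose, hB₄]
  · rw [← transpose_mul, transpose_transpose, hB₃]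

theorem transpose_eq_self (hA : Aᵀ = A) (hB : IsMoorePenrose p A B) : Bᵀ = B :=
  (hA ▸ hB.transpose).unique hB

theorem dotProduct_mulVec_mulVec (hA : Aᵀ = A) (hB : IsMoorePenrose p A B) (u : Fin p → ℝ) :
    A *ᵥ u ⬝ᵥ B *ᵥ (A *ᵥ u) = u ⬝ᵥ A *ᵥ u := by
  rw [dotProduct_comm, ← dotProduct_transpose_mulVec, hA, mulVec_mulVec, mulVec_mulVec, hB.1]

theorem dotProduct_mulVec_eq (hA : Aᵀ = A) (hB : IsMoorePenrose p A B) (s : Fin p → ℝ) :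
    s ⬝ᵥ B *ᵥ s = 2 * (B *ᵥ s ⬝ᵥ s) - B *ᵥ s ⬝ᵥ A *ᵥ (B *ᵥ s) := by
  have hquad : B *ᵥ s ⬝ᵥ A *ᵥ (B *ᵥ s) = s ⬝ᵥ B *ᵥ s := by
    rw [dotProduct_comm, ← dotProduct_transpose_mulVec, hB.transpose_eq_self hA,
      mulVec_mulVec, mulVec_mulVec, hB.2.1]
  rw [hquad, dotProduct_comm (B *ᵥ s)]
  ring

end IsMoorePenrose

theorem stmt8_general (p : ℕ) (A₁ A₂ P₁ P₂ P₁₂ : Matrix (Fin p) (Fin p) ℝ)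
    (h1 : A₁.PosSemidef) (h2 : A₂.PosSemidef)
    (hP1 : IsMoorePenrose p A₁ P₁) (hP2 : IsMoorePenrose p A₂ P₂)
    (hP12 : IsMoorePenrose p (A₁ + A₂) P₁₂)
    (x y : Fin p → ℝ)
    (hx : x ∈ LinearMap.range A₁.mulVecLin)
    (hy : y ∈ LinearMap.range A₂.mulVecLin) :
    (x + y) ⬝ᵥ P₁₂.mulVec (x + y) ≤ x ⬝ᵥ P₁.mulVec x + y ⬝ᵥ P₂.mulVec y := by
  obtain ⟨u, rfl⟩ := hx
  obtain ⟨v, rfl⟩ := hy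
  have hA₁ : A₁ᵀ = A₁ := h1.1
  have hA₂ : A₂ᵀ = A₂ := h2.1
  set z := P₁₂ *ᵥ (A₁ *ᵥ u + A₂ *ᵥ v)
  have h₁ := h1.two_mul_dotProduct_mulVec_le z u
  have h₂ := h2.two_mul_dotProduct_mulVec_le z v
  simp only [mulVecLin_apply]
  rw [hP12.dotProduct_mulVec_eq (by rw [transpose_add, hA₁, hA₂]),
    hP1.dotProduct_mulVec_mulVec hA₁, hP2.dotProduct_mulVec_mulVec hA₂,
    dotProduct_add, add_mulVec, dotProduct_add]
  linarith

/-- For psd matrices `A₁, A₂` with equal column spaces and vectors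
`x, y` in the common column space,
`(x+y)ᵀ(A₁+A₂)⁺(x+y) ≤ xᵀA₁⁺x + yᵀA₂⁺y`. -/
theorem stmt8 (p : ℕ) (A₁ A₂ P₁ P₂ P₁₂ : Matrix (Fin p) (Fin p) ℝ)
    (h1 : A₁.PosSemidef) (h2 : A₂.PosSemidef)
    (hrange : LinearMap.range A₁.mulVecLin = LinearMap.range A₂.mulVecLin)
    (hP1 : IsMoorePenrose p A₁ P₁) (hP2 : IsMoorePenrose p A₂ P₂)
    (hP12 : IsMoorePenrose p (A₁ + A₂) P₁₂)
    (x y : Fin p → ℝ)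
    (hx : x ∈ LinearMap.range A₁.mulVecLin)
    (hy : y ∈ LinearMap.range A₂.mulVecLin) :
    (x + y) ⬝ᵥ P₁₂.mulVec (x + y) ≤ x ⬝ᵥ P₁.mulVec x + y ⬝ᵥ P₂.mulVec y :=
  stmt8_general p A₁ A₂ P₁ P₂ P₁₂ h1 h2 hP1 hP2 hP12 x y hx hy
end

section
/- The map (x, A) ↦ xᵀA⁻¹x is jointly convex on ℝᵖ × {positive definite p×p matrices}: for positive definite S, T, vectors x, y ∈ ℝᵖ, and α ∈ (0,1), (αx + (1−α)y)ᵀ(αS + (1−α)T)⁻¹(αx + (1−α)y) ≤ α·xᵀS⁻¹x + (1−α)·yᵀT⁻¹y. -/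
open Matrix

/-!
The proof is by the variational formula
`xᵀA⁻¹x = max_z (2 zᵀx - zᵀAz)` for positive definite `A`, the maximum being attained at
`z = A⁻¹x`. The expression under the maximum is affine in the pair `(x, A)`, so evaluating
at the maximiser for `αS + (1 - α)T` and bounding each of the two resulting terms by its own
maximum gives the inequality.
-/

namespace Matrix

variable {n : Type*} [Fintype n] [DecidableEq n]

theorem dotProduct_inv_mulVec_eq_two_mul_sub {A : Matrix n n ℝ} (hA : IsUnit A.det)
    (x : n → ℝ) :
    x ⬝ᵥ A⁻¹ *ᵥ x = 2 * (A⁻¹ *ᵥ x ⬝ᵥ x) - A⁻¹ *ᵥ x ⬝ᵥ A *ᵥ (A⁻¹ *ᵥ x) := by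
  rw [mulVec_mulVec, mul_nonsing_inv A hA, one_mulVec, dotProduct_comm x]
  ring

theorem PosDef.two_mul_dotProduct_sub_le {A : Matrix n n ℝ} (hA : A.PosDef) (x z : n → ℝ) :
    2 * (z ⬝ᵥ x) - z ⬝ᵥ A *ᵥ z ≤ x ⬝ᵥ A⁻¹ *ᵥ x := by
  have hsymm : Aᵀ = A := hA.1.eq
  have hnonneg : 0 ≤ (x - A *ᵥ z) ⬝ᵥ A⁻¹ *ᵥ (x - A *ᵥ z) := by
    simpa using hA.inv.posSemidef.dotProduct_mulVec_nonneg (x - A *ᵥ z)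
  have hcancel : A⁻¹ *ᵥ (A *ᵥ z) = z := by
    rw [mulVec_mulVec, nonsing_inv_mul A hA.det_pos.ne'.isUnit, one_mulVec]
  have hcross : A *ᵥ z ⬝ᵥ A⁻¹ *ᵥ x = z ⬝ᵥ x := by
    rw [← vecMul_transpose, hsymm, dotProduct_mulVec, vecMul_vecMul,
      mul_nonsing_inv A hA.det_pos.ne'.isUnit, vecMul_one]
  have hquad : A *ᵥ z ⬝ᵥ z = z ⬝ᵥ A *ᵥ z := by
    rw [dotProduct_mulVec, ← vecMul_transpose, hsymm]
  rw [mulVec_sub, dotProduct_sub, sub_dotProduct, sub_dotProduct, hcancel, hcross,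
    dotProduct_comm x z, hquad] at hnonneg
  linarith

end Matrix

/-- Joint convexity of `(x, A) ↦ xᵀA⁻¹x` on `ℝᵖ × {posdef}`. -/
theorem stmt9 (p : ℕ) (S T : Matrix (Fin p) (Fin p) ℝ)
    (hS : S.PosDef) (hT : T.PosDef) (x y : Fin p → ℝ)
    (α : ℝ) (hα : α ∈ Set.Ioo (0 : ℝ) 1) :
    (α • x + (1 - α) • y) ⬝ᵥ (α • S + (1 - α) • T)⁻¹.mulVec (α • x + (1 - α) • y) ≤
      α * (x ⬝ᵥ S⁻¹.mulVec x) + (1 - α) * (y ⬝ᵥ T⁻¹.mulVec y) := by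
  obtain ⟨hα₀, hα₁⟩ := hα
  have hβ : 0 < 1 - α := sub_pos.mpr hα₁
  set M := α • S + (1 - α) • T
  set v := α • x + (1 - α) • y
  have hM : M.PosDef := (hS.smul hα₀).add (hT.smul hβ)
  set z := M⁻¹ *ᵥ v
  calc v ⬝ᵥ M⁻¹ *ᵥ v = 2 * (z ⬝ᵥ v) - z ⬝ᵥ M *ᵥ z :=
        dotProduct_inv_mulVec_eq_two_mul_sub hM.det_pos.ne'.isUnit v
    _ = α * (2 * (z ⬝ᵥ x) - z ⬝ᵥ S *ᵥ z) + (1 - α) * (2 * (z ⬝ᵥ y) - z ⬝ᵥ T *ᵥ z) := by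
        simp only [M, v, add_mulVec, smul_mulVec, dotProduct_add, dotProduct_smul, smul_eq_mul]
        ring
    _ ≤ α * (x ⬝ᵥ S⁻¹ *ᵥ x) + (1 - α) * (y ⬝ᵥ T⁻¹ *ᵥ y) := by
        gcongr
        · exact hS.two_mul_dotProduct_sub_le x z
        · exact hT.two_mul_dotProduct_sub_le y z
end

section
/- The set {(x̄, S) : x̄ ∈ ℝᵖ, S a p×p positive definite matrix, x̄ᵀS⁻¹x̄ ≤ k} is convex (as a subset of ℝᵖ × Sym(p,ℝ)) for every k ≥ 0. -/
/-!
For `S ≻ 0`, the Schur complement criterion says `xᵀ S⁻¹ x ≤ k` exactly when the block matrix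
`!![S, x; xᵀ, k]` is positive semidefinite. That block matrix depends affinely on `(x, S)`, so
convexity of the set reduces to convexity of the cones of positive definite and of positive
semidefinite matrices.
-/

open Matrix

namespace Matrix

variable {n : Type*}

theorem convex_setOf_posSemidef : Convex ℝ {M : Matrix n n ℝ | M.PosSemidef} :=
  fun _ hA _ hB _ _ ha hb _ => (hA.smul ha).add (hB.smul hb)

theorem convex_setOf_posDef : Convex ℝ {M : Matrix n n ℝ | M.PosDef} := by
  intro A hA B hB a b ha hb hab
  rcases ha.eq_or_lt with rfl | ha
  · obtain rfl : b = 1 := by simpa using hab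
    simpa using hB
  · exact (hA.smul ha).add_posSemidef (hB.posSemidef.smul hb)

theorem posSemidef_const_unit_iff {c : ℝ} :
    (of fun _ _ => c : Matrix Unit Unit ℝ).PosSemidef ↔ 0 ≤ c := by
  have hdiag : (of fun _ _ => c : Matrix Unit Unit ℝ) = diagonal fun _ => c := by
    ext
    simp
  simp [hdiag]

def schurBlock (x : n → ℝ) (S : Matrix n n ℝ) (k : ℝ) : Matrix (n ⊕ Unit) (n ⊕ Unit) ℝ :=
  fromBlocks S (replicateCol Unit x) (replicateRow Unit x) (of fun _ _ => k)

theorem schurBlock_add_smul {a b : ℝ} (hab : a + b = 1) (x y : n → ℝ) (S T : Matrix n n ℝ)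
    (k : ℝ) : schurBlock (a • x + b • y) (a • S + b • T) k =
      a • schurBlock x S k + b • schurBlock y T k := by
  have hk : (of fun _ _ => k : Matrix Unit Unit ℝ) = a • of (fun _ _ => k) + b • of fun _ _ => k := by
    rw [← add_smul, hab, one_smul]
  rw [schurBlock, schurBlock, schurBlock, fromBlocks_smul, fromBlocks_smul, fromBlocks_add,
    replicateCol_add, replicateCol_smul, replicateCol_smul, replicateRow_add, replicateRow_smul,
    replicateRow_smul, ← hk]

variable [Fintype n] [DecidableEq n]

theorem dotProduct_inv_mulVec_le_iff_posSemidef_schurBlock {S : Matrix n n ℝ} (hS : S.PosDef)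
    (x : n → ℝ) (k : ℝ) : x ⬝ᵥ S⁻¹ *ᵥ x ≤ k ↔ (schurBlock x S k).PosSemidef := by
  have := hS.isUnit.invertible
  have hrow : replicateRow Unit x = (replicateCol Unit x)ᴴ := by
    simp
  have hschur : (of fun _ _ => k) - (replicateCol Unit x)ᴴ * S⁻¹ * replicateCol Unit x =
      of fun _ _ => k - x ⬝ᵥ S⁻¹ *ᵥ x := by
    ext
    rw [dotProduct_mulVec]
    simp [Matrix.mul_apply, vecMul, dotProduct, Finset.sum_mul]
  rw [schurBlock, hrow, PosDef.fromBlocks₁₁ _ _ hS, hschur, posSemidef_const_unit_iff, sub_nonneg]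

end Matrix

theorem stmt10_general (p : ℕ) (k : ℝ) :
    Convex ℝ {q : (Fin p → ℝ) × Matrix (Fin p) (Fin p) ℝ |
      q.2.PosDef ∧ q.1 ⬝ᵥ q.2⁻¹.mulVec q.1 ≤ k} := by
  rintro ⟨x, S⟩ ⟨hS, hx⟩ ⟨y, T⟩ ⟨hT, hy⟩ a b ha hb hab
  have hST : (a • S + b • T).PosDef := convex_setOf_posDef hS hT ha hb hab
  refine ⟨hST, ?_⟩
  rw [dotProduct_inv_mulVec_le_iff_posSemidef_schurBlock hS] at hx
  rw [dotProduct_inv_mulVec_le_iff_posSemidef_schurBlock hT] at hy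
  show (a • x + b • y) ⬝ᵥ (a • S + b • T)⁻¹ *ᵥ (a • x + b • y) ≤ k
  rw [dotProduct_inv_mulVec_le_iff_posSemidef_schurBlock hST, schurBlock_add_smul hab]
  exact convex_setOf_posSemidef hx hy ha hb hab

/-- The set `{(x̄, S) : S posdef, x̄ᵀS⁻¹x̄ ≤ k}` is convex in
`ℝᵖ × Sym(p, ℝ)` for every `k ≥ 0`. -/
theorem stmt10 (p : ℕ) (k : ℝ) (hk : 0 ≤ k) :
    Convex ℝ {q : (Fin p → ℝ) × Matrix (Fin p) (Fin p) ℝ |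
      q.2.PosDef ∧ q.1 ⬝ᵥ q.2⁻¹.mulVec q.1 ≤ k} :=
  stmt10_general p k
end
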